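/- Let f be a polynomial over ℂ of degree 7, and for 1 ≤ ρ ≤ 6 let φ_ρ denote the average of f over the multiset of the (7−ρ) roots of the ρ-th derivative f^(ρ) (counted with multiplicity). Then 85·φ₁ − 144·φ₂ + 90·φ₃ − 40·φ₄ + 9·φ₅ = 0. -/
import Mathlib

open Polynomial

/-- The average of `f` over the roots of the `ρ`-th derivative of `f`,
counted with multiplicity. -/
noncomputable def phi (f : Polynomial ℂ) (ρ : ℕ) : ℂ :=
  ((derivative^[ρ] f).roots.map (fun x => f.eval x)).sum / ((f.natDegree - ρ : ℕ) : ℂ)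

noncomputable def psum (k : ℕ) (s : Multiset ℂ) : ℂ := (s.map (· ^ k)).sum

lemma psum_cons (k : ℕ) (a : ℂ) (s : Multiset ℂ) : psum k (a ::ₘ s) = a ^ k + psum k s := by
  simp [psum]

lemma psum_zero (s : Multiset ℂ) : psum 0 s = (Multiset.card s : ℂ) := by
  simp [psum]

lemma esymm_zero' (s : Multiset ℂ) : s.esymm 0 = 1 := by
  simp [Multiset.esymm, Multiset.powersetCard_zero_left]

lemma esymm_cons (a : ℂ) (s : Multiset ℂ) (k : ℕ) :
    (a ::ₘ s).esymm (k + 1) = s.esymm (k + 1) + a * s.esymm k := by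
  rw [Multiset.esymm, Multiset.powersetCard_cons, Multiset.map_add, Multiset.sum_add,
    Multiset.map_map]
  simp only [Function.comp_def, Multiset.prod_cons]
  rw [Multiset.sum_map_mul_left]
  rfl

lemma esymm_empty (k : ℕ) (h : k ≠ 0) : (0 : Multiset ℂ).esymm k = 0 := by
  obtain ⟨m, rfl⟩ := Nat.exists_eq_succ_of_ne_zero h
  simp [Multiset.esymm, Multiset.powersetCard_zero_right]

lemma esymm_cons1 (a : ℂ) (s : Multiset ℂ) :
    (a ::ₘ s).esymm 1 = s.esymm 1 + a * s.esymm 0 := esymm_cons a s 0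

lemma esymm_cons2 (a : ℂ) (s : Multiset ℂ) :
    (a ::ₘ s).esymm 2 = s.esymm 2 + a * s.esymm 1 := esymm_cons a s 1

lemma esymm_cons3 (a : ℂ) (s : Multiset ℂ) :
    (a ::ₘ s).esymm 3 = s.esymm 3 + a * s.esymm 2 := esymm_cons a s 2

lemma esymm_cons4 (a : ℂ) (s : Multiset ℂ) :
    (a ::ₘ s).esymm 4 = s.esymm 4 + a * s.esymm 3 := esymm_cons a s 3

lemma esymm_cons5 (a : ℂ) (s : Multiset ℂ) :
    (a ::ₘ s).esymm 5 = s.esymm 5 + a * s.esymm 4 := esymm_cons a s 4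

lemma esymm_cons6 (a : ℂ) (s : Multiset ℂ) :
    (a ::ₘ s).esymm 6 = s.esymm 6 + a * s.esymm 5 := esymm_cons a s 5

lemma esymm_cons7 (a : ℂ) (s : Multiset ℂ) :
    (a ::ₘ s).esymm 7 = s.esymm 7 + a * s.esymm 6 := esymm_cons a s 6

lemma esymm_empty1 : (0 : Multiset ℂ).esymm 1 = 0 := esymm_empty 1 (by norm_num)

lemma esymm_empty2 : (0 : Multiset ℂ).esymm 2 = 0 := esymm_empty 2 (by norm_num)

lemma esymm_empty3 : (0 : Multiset ℂ).esymm 3 = 0 := esymm_empty 3 (by norm_num)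

lemma esymm_empty4 : (0 : Multiset ℂ).esymm 4 = 0 := esymm_empty 4 (by norm_num)

lemma esymm_empty5 : (0 : Multiset ℂ).esymm 5 = 0 := esymm_empty 5 (by norm_num)

lemma esymm_empty6 : (0 : Multiset ℂ).esymm 6 = 0 := esymm_empty 6 (by norm_num)

lemma esymm_empty7 : (0 : Multiset ℂ).esymm 7 = 0 := esymm_empty 7 (by norm_num)

lemma psum1 (s : Multiset ℂ) : psum 1 s = (1)*s.esymm 1 := by
  induction s using Multiset.induction with
  | empty => simp [psum, esymm_empty1, esymm_empty2, esymm_empty3, esymm_empty4, esymm_empty5, esymm_empty6, esymm_empty7]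
  | cons a s ih => simp only [psum_cons, ih, esymm_cons1, esymm_cons2, esymm_cons3, esymm_cons4, esymm_cons5, esymm_cons6, esymm_cons7, esymm_zero']; ring

lemma psum2 (s : Multiset ℂ) : psum 2 s = (-2)*s.esymm 2 + (1)*s.esymm 1^2 := by
  induction s using Multiset.induction with
  | empty => simp [psum, esymm_empty1, esymm_empty2, esymm_empty3, esymm_empty4, esymm_empty5, esymm_empty6, esymm_empty7]
  | cons a s ih => simp only [psum_cons, ih, esymm_cons1, esymm_cons2, esymm_cons3, esymm_cons4, esymm_cons5, esymm_cons6, esymm_cons7, esymm_zero']; ring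

lemma psum3 (s : Multiset ℂ) : psum 3 s = (3)*s.esymm 3 + (-3)*s.esymm 1*s.esymm 2 + (1)*s.esymm 1^3 := by
  induction s using Multiset.induction with
  | empty => simp [psum, esymm_empty1, esymm_empty2, esymm_empty3, esymm_empty4, esymm_empty5, esymm_empty6, esymm_empty7]
  | cons a s ih => simp only [psum_cons, ih, esymm_cons1, esymm_cons2, esymm_cons3, esymm_cons4, esymm_cons5, esymm_cons6, esymm_cons7, esymm_zero']; ring

lemma psum4 (s : Multiset ℂ) : psum 4 s = (-4)*s.esymm 4 + (2)*s.esymm 2^2 + (4)*s.esymm 1*s.esymm 3 + (-4)*s.esymm 1^2*s.esymm 2 + (1)*s.esymm 1^4 := by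
  induction s using Multiset.induction with
  | empty => simp [psum, esymm_empty1, esymm_empty2, esymm_empty3, esymm_empty4, esymm_empty5, esymm_empty6, esymm_empty7]
  | cons a s ih => simp only [psum_cons, ih, esymm_cons1, esymm_cons2, esymm_cons3, esymm_cons4, esymm_cons5, esymm_cons6, esymm_cons7, esymm_zero']; ring

lemma psum5 (s : Multiset ℂ) : psum 5 s = (5)*s.esymm 5 + (-5)*s.esymm 2*s.esymm 3 + (-5)*s.esymm 1*s.esymm 4 + (5)*s.esymm 1*s.esymm 2^2 + (5)*s.esymm 1^2*s.esymm 3 + (-5)*s.esymm 1^3*s.esymm 2 + (1)*s.esymm 1^5 := by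
  induction s using Multiset.induction with
  | empty => simp [psum, esymm_empty1, esymm_empty2, esymm_empty3, esymm_empty4, esymm_empty5, esymm_empty6, esymm_empty7]
  | cons a s ih => simp only [psum_cons, ih, esymm_cons1, esymm_cons2, esymm_cons3, esymm_cons4, esymm_cons5, esymm_cons6, esymm_cons7, esymm_zero']; ring

lemma psum6 (s : Multiset ℂ) : psum 6 s = (-6)*s.esymm 6 + (3)*s.esymm 3^2 + (6)*s.esymm 2*s.esymm 4 + (-2)*s.esymm 2^3 + (6)*s.esymm 1*s.esymm 5 + (-12)*s.esymm 1*s.esymm 2*s.esymm 3 + (-6)*s.esymm 1^2*s.esymm 4 + (9)*s.esymm 1^2*s.esymm 2^2 + (6)*s.esymm 1^3*s.esymm 3 + (-6)*s.esymm 1^4*s.esymm 2 + (1)*s.esymm 1^6 := by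
  induction s using Multiset.induction with
  | empty => simp [psum, esymm_empty1, esymm_empty2, esymm_empty3, esymm_empty4, esymm_empty5, esymm_empty6, esymm_empty7]
  | cons a s ih => simp only [psum_cons, ih, esymm_cons1, esymm_cons2, esymm_cons3, esymm_cons4, esymm_cons5, esymm_cons6, esymm_cons7, esymm_zero']; ring

lemma psum7 (s : Multiset ℂ) : psum 7 s = (7)*s.esymm 7 + (-7)*s.esymm 3*s.esymm 4 + (-7)*s.esymm 2*s.esymm 5 + (7)*s.esymm 2^2*s.esymm 3 + (-7)*s.esymm 1*s.esymm 6 + (7)*s.esymm 1*s.esymm 3^2 + (14)*s.esymm 1*s.esymm 2*s.esymm 4 + (-7)*s.esymm 1*s.esymm 2^3 + (7)*s.esymm 1^2*s.esymm 5 + (-21)*s.esymm 1^2*s.esymm 2*s.esymm 3 + (-7)*s.esymm 1^3*s.esymm 4 + (14)*s.esymm 1^3*s.esymm 2^2 + (7)*s.esymm 1^4*s.esymm 3 + (-7)*s.esymm 1^5*s.esymm 2 + (1)*s.esymm 1^7 := by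
  induction s using Multiset.induction with
  | empty => simp [psum, esymm_empty1, esymm_empty2, esymm_empty3, esymm_empty4, esymm_empty5, esymm_empty6, esymm_empty7]
  | cons a s ih => simp only [psum_cons, ih, esymm_cons1, esymm_cons2, esymm_cons3, esymm_cons4, esymm_cons5, esymm_cons6, esymm_cons7, esymm_zero']; ring

lemma sum_eval (f : Polynomial ℂ) (hd : f.natDegree = 7) (s : Multiset ℂ) :
    (s.map (fun x => f.eval x)).sum = ∑ i ∈ Finset.range 8, f.coeff i * psum i s := by
  induction s using Multiset.induction with
  | empty => simp [psum]
  | cons a s ih =>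
      rw [Multiset.map_cons, Multiset.sum_cons, ih,
        eval_eq_sum_range' (by omega : f.natDegree < 8) a]
      rw [← Finset.sum_add_distrib]
      exact Finset.sum_congr rfl fun i _ => by rw [psum_cons]; ring

lemma esymm_roots (g : Polynomial ℂ) (hg : g ≠ 0) (i : ℕ) (hi : i ≤ g.natDegree) :
    g.roots.esymm i = (-1) ^ i * g.coeff (g.natDegree - i) / g.leadingCoeff := by
  have h := Polynomial.coeff_eq_esymm_roots_of_splits
    (IsAlgClosed.splits (k := ℂ) g) (Nat.sub_le g.natDegree i)
  rw [Nat.sub_sub_self hi] at h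
  have hlc : g.leadingCoeff ≠ 0 := Polynomial.leadingCoeff_ne_zero.mpr hg
  have hsq : ((-1 : ℂ)) ^ i * (-1) ^ i = 1 := by
    rw [← pow_add, ← two_mul, pow_mul]; norm_num
  have key : (-1 : ℂ) ^ i * (g.leadingCoeff * (-1) ^ i * g.roots.esymm i)
      = g.roots.esymm i * g.leadingCoeff := by
    calc (-1 : ℂ) ^ i * (g.leadingCoeff * (-1) ^ i * g.roots.esymm i)
        = ((-1 : ℂ) ^ i * (-1) ^ i) * (g.roots.esymm i * g.leadingCoeff) := by ring
      _ = g.roots.esymm i * g.leadingCoeff := by rw [hsq, one_mul]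
  rw [h, key, mul_div_cancel_right₀ _ hlc]

lemma esymm_roots_high (g : Polynomial ℂ) (n : ℕ) (hcard : Multiset.card g.roots = n)
    (i : ℕ) (hi : n < i) : g.roots.esymm i = 0 := by
  rw [Multiset.esymm, Multiset.powersetCard_eq_empty _ (by rw [hcard]; exact hi)]
  simp

set_option maxHeartbeats 4000000 in
/-- In any septic, `85·φ₁ − 144·φ₂ + 90·φ₃ − 40·φ₄ + 9·φ₅ = 0`. -/
theorem septic_relation_m (f : Polynomial ℂ) (hf : f.degree = 7) :
    85 * phi f 1 - 144 * phi f 2 + 90 * phi f 3 - 40 * phi f 4 + 9 * phi f 5 = 0 := by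
  have hf0 : f ≠ 0 := fun h => by simp [h] at hf
  have hnd : f.natDegree = 7 := natDegree_eq_of_degree_eq_some hf
  have ha7 : f.coeff 7 ≠ 0 := by
    have := Polynomial.leadingCoeff_ne_zero.mpr hf0
    rwa [Polynomial.leadingCoeff, hnd] at this
  have c1_0 : (derivative^[1] f).coeff 0 = 1 * f.coeff 1 := by
    rw [Polynomial.coeff_iterate_derivative]
    norm_num [Nat.descFactorial]
  have c1_1 : (derivative^[1] f).coeff 1 = 2 * f.coeff 2 := by
    rw [Polynomial.coeff_iterate_derivative]
    norm_num [Nat.descFactorial]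
  have c1_2 : (derivative^[1] f).coeff 2 = 3 * f.coeff 3 := by
    rw [Polynomial.coeff_iterate_derivative]
    norm_num [Nat.descFactorial]
  have c1_3 : (derivative^[1] f).coeff 3 = 4 * f.coeff 4 := by
    rw [Polynomial.coeff_iterate_derivative]
    norm_num [Nat.descFactorial]
  have c1_4 : (derivative^[1] f).coeff 4 = 5 * f.coeff 5 := by
    rw [Polynomial.coeff_iterate_derivative]
    norm_num [Nat.descFactorial]
  have c1_5 : (derivative^[1] f).coeff 5 = 6 * f.coeff 6 := by
    rw [Polynomial.coeff_iterate_derivative]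
    norm_num [Nat.descFactorial]
  have c1_6 : (derivative^[1] f).coeff 6 = 7 * f.coeff 7 := by
    rw [Polynomial.coeff_iterate_derivative]
    norm_num [Nat.descFactorial]
  have hne1 : (derivative^[1] f) ≠ 0 := fun h => by
    rw [h] at c1_6; simp at c1_6; exact ha7 (by tauto)
  have hdeg1 : (derivative^[1] f).natDegree = 6 := by
    refine le_antisymm ((Polynomial.natDegree_iterate_derivative f 1).trans (by rw [hnd])) ?_
    apply Polynomial.le_natDegree_of_ne_zero
    rw [c1_6]
    exact mul_ne_zero (by norm_num) ha7
  have hcard1 : Multiset.card (derivative^[1] f).roots = 6 := by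
    rw [← hdeg1]
    exact (Polynomial.splits_iff_card_roots.mp (IsAlgClosed.splits (k := ℂ) _))
  have hlc1 : (derivative^[1] f).leadingCoeff = 7 * f.coeff 7 := by
    rw [Polynomial.leadingCoeff, hdeg1, c1_6]
  have E1_1 : (derivative^[1] f).roots.esymm 1 = (-1)^1 * (6 * f.coeff 6) / (7 * f.coeff 7) := by
    rw [esymm_roots _ hne1 1 (by rw [hdeg1]; try norm_num), hdeg1,
      show (6 - 1 : ℕ) = 5 from rfl, c1_5, hlc1]
  have E1_2 : (derivative^[1] f).roots.esymm 2 = (-1)^2 * (5 * f.coeff 5) / (7 * f.coeff 7) := by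
    rw [esymm_roots _ hne1 2 (by rw [hdeg1]; try norm_num), hdeg1,
      show (6 - 2 : ℕ) = 4 from rfl, c1_4, hlc1]
  have E1_3 : (derivative^[1] f).roots.esymm 3 = (-1)^3 * (4 * f.coeff 4) / (7 * f.coeff 7) := by
    rw [esymm_roots _ hne1 3 (by rw [hdeg1]; try norm_num), hdeg1,
      show (6 - 3 : ℕ) = 3 from rfl, c1_3, hlc1]
  have E1_4 : (derivative^[1] f).roots.esymm 4 = (-1)^4 * (3 * f.coeff 3) / (7 * f.coeff 7) := by
    rw [esymm_roots _ hne1 4 (by rw [hdeg1]; try norm_num), hdeg1,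
      show (6 - 4 : ℕ) = 2 from rfl, c1_2, hlc1]
  have E1_5 : (derivative^[1] f).roots.esymm 5 = (-1)^5 * (2 * f.coeff 2) / (7 * f.coeff 7) := by
    rw [esymm_roots _ hne1 5 (by rw [hdeg1]; try norm_num), hdeg1,
      show (6 - 5 : ℕ) = 1 from rfl, c1_1, hlc1]
  have E1_6 : (derivative^[1] f).roots.esymm 6 = (-1)^6 * (1 * f.coeff 1) / (7 * f.coeff 7) := by
    rw [esymm_roots _ hne1 6 (by rw [hdeg1]; try norm_num), hdeg1,
      show (6 - 6 : ℕ) = 0 from rfl, c1_0, hlc1]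
  have E1_7 : (derivative^[1] f).roots.esymm 7 = 0 :=
    esymm_roots_high _ 6 hcard1 7 (by norm_num)
  have c2_0 : (derivative^[2] f).coeff 0 = 2 * f.coeff 2 := by
    rw [Polynomial.coeff_iterate_derivative]
    norm_num [Nat.descFactorial]
  have c2_1 : (derivative^[2] f).coeff 1 = 6 * f.coeff 3 := by
    rw [Polynomial.coeff_iterate_derivative]
    norm_num [Nat.descFactorial]
  have c2_2 : (derivative^[2] f).coeff 2 = 12 * f.coeff 4 := by
    rw [Polynomial.coeff_iterate_derivative]
    norm_num [Nat.descFactorial]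
  have c2_3 : (derivative^[2] f).coeff 3 = 20 * f.coeff 5 := by
    rw [Polynomial.coeff_iterate_derivative]
    norm_num [Nat.descFactorial]
  have c2_4 : (derivative^[2] f).coeff 4 = 30 * f.coeff 6 := by
    rw [Polynomial.coeff_iterate_derivative]
    norm_num [Nat.descFactorial]
  have c2_5 : (derivative^[2] f).coeff 5 = 42 * f.coeff 7 := by
    rw [Polynomial.coeff_iterate_derivative]
    norm_num [Nat.descFactorial]
  have hne2 : (derivative^[2] f) ≠ 0 := fun h => by
    rw [h] at c2_5; simp at c2_5; exact ha7 (by tauto)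
  have hdeg2 : (derivative^[2] f).natDegree = 5 := by
    refine le_antisymm ((Polynomial.natDegree_iterate_derivative f 2).trans (by rw [hnd])) ?_
    apply Polynomial.le_natDegree_of_ne_zero
    rw [c2_5]
    exact mul_ne_zero (by norm_num) ha7
  have hcard2 : Multiset.card (derivative^[2] f).roots = 5 := by
    rw [← hdeg2]
    exact (Polynomial.splits_iff_card_roots.mp (IsAlgClosed.splits (k := ℂ) _))
  have hlc2 : (derivative^[2] f).leadingCoeff = 42 * f.coeff 7 := by
    rw [Polynomial.leadingCoeff, hdeg2, c2_5]
  have E2_1 : (derivative^[2] f).roots.esymm 1 = (-1)^1 * (30 * f.coeff 6) / (42 * f.coeff 7) := by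
    rw [esymm_roots _ hne2 1 (by rw [hdeg2]; try norm_num), hdeg2,
      show (5 - 1 : ℕ) = 4 from rfl, c2_4, hlc2]
  have E2_2 : (derivative^[2] f).roots.esymm 2 = (-1)^2 * (20 * f.coeff 5) / (42 * f.coeff 7) := by
    rw [esymm_roots _ hne2 2 (by rw [hdeg2]; try norm_num), hdeg2,
      show (5 - 2 : ℕ) = 3 from rfl, c2_3, hlc2]
  have E2_3 : (derivative^[2] f).roots.esymm 3 = (-1)^3 * (12 * f.coeff 4) / (42 * f.coeff 7) := by
    rw [esymm_roots _ hne2 3 (by rw [hdeg2]; try norm_num), hdeg2,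
      show (5 - 3 : ℕ) = 2 from rfl, c2_2, hlc2]
  have E2_4 : (derivative^[2] f).roots.esymm 4 = (-1)^4 * (6 * f.coeff 3) / (42 * f.coeff 7) := by
    rw [esymm_roots _ hne2 4 (by rw [hdeg2]; try norm_num), hdeg2,
      show (5 - 4 : ℕ) = 1 from rfl, c2_1, hlc2]
  have E2_5 : (derivative^[2] f).roots.esymm 5 = (-1)^5 * (2 * f.coeff 2) / (42 * f.coeff 7) := by
    rw [esymm_roots _ hne2 5 (by rw [hdeg2]; try norm_num), hdeg2,
      show (5 - 5 : ℕ) = 0 from rfl, c2_0, hlc2]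
  have E2_6 : (derivative^[2] f).roots.esymm 6 = 0 :=
    esymm_roots_high _ 5 hcard2 6 (by norm_num)
  have E2_7 : (derivative^[2] f).roots.esymm 7 = 0 :=
    esymm_roots_high _ 5 hcard2 7 (by norm_num)
  have c3_0 : (derivative^[3] f).coeff 0 = 6 * f.coeff 3 := by
    rw [Polynomial.coeff_iterate_derivative]
    norm_num [Nat.descFactorial]
  have c3_1 : (derivative^[3] f).coeff 1 = 24 * f.coeff 4 := by
    rw [Polynomial.coeff_iterate_derivative]
    norm_num [Nat.descFactorial]
  have c3_2 : (derivative^[3] f).coeff 2 = 60 * f.coeff 5 := by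
    rw [Polynomial.coeff_iterate_derivative]
    norm_num [Nat.descFactorial]
  have c3_3 : (derivative^[3] f).coeff 3 = 120 * f.coeff 6 := by
    rw [Polynomial.coeff_iterate_derivative]
    norm_num [Nat.descFactorial]
  have c3_4 : (derivative^[3] f).coeff 4 = 210 * f.coeff 7 := by
    rw [Polynomial.coeff_iterate_derivative]
    norm_num [Nat.descFactorial]
  have hne3 : (derivative^[3] f) ≠ 0 := fun h => by
    rw [h] at c3_4; simp at c3_4; exact ha7 (by tauto)
  have hdeg3 : (derivative^[3] f).natDegree = 4 := by
    refine le_antisymm ((Polynomial.natDegree_iterate_derivative f 3).trans (by rw [hnd])) ?_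
    apply Polynomial.le_natDegree_of_ne_zero
    rw [c3_4]
    exact mul_ne_zero (by norm_num) ha7
  have hcard3 : Multiset.card (derivative^[3] f).roots = 4 := by
    rw [← hdeg3]
    exact (Polynomial.splits_iff_card_roots.mp (IsAlgClosed.splits (k := ℂ) _))
  have hlc3 : (derivative^[3] f).leadingCoeff = 210 * f.coeff 7 := by
    rw [Polynomial.leadingCoeff, hdeg3, c3_4]
  have E3_1 : (derivative^[3] f).roots.esymm 1 = (-1)^1 * (120 * f.coeff 6) / (210 * f.coeff 7) := by
    rw [esymm_roots _ hne3 1 (by rw [hdeg3]; try norm_num), hdeg3,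
      show (4 - 1 : ℕ) = 3 from rfl, c3_3, hlc3]
  have E3_2 : (derivative^[3] f).roots.esymm 2 = (-1)^2 * (60 * f.coeff 5) / (210 * f.coeff 7) := by
    rw [esymm_roots _ hne3 2 (by rw [hdeg3]; try norm_num), hdeg3,
      show (4 - 2 : ℕ) = 2 from rfl, c3_2, hlc3]
  have E3_3 : (derivative^[3] f).roots.esymm 3 = (-1)^3 * (24 * f.coeff 4) / (210 * f.coeff 7) := by
    rw [esymm_roots _ hne3 3 (by rw [hdeg3]; try norm_num), hdeg3,
      show (4 - 3 : ℕ) = 1 from rfl, c3_1, hlc3]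
  have E3_4 : (derivative^[3] f).roots.esymm 4 = (-1)^4 * (6 * f.coeff 3) / (210 * f.coeff 7) := by
    rw [esymm_roots _ hne3 4 (by rw [hdeg3]; try norm_num), hdeg3,
      show (4 - 4 : ℕ) = 0 from rfl, c3_0, hlc3]
  have E3_5 : (derivative^[3] f).roots.esymm 5 = 0 :=
    esymm_roots_high _ 4 hcard3 5 (by norm_num)
  have E3_6 : (derivative^[3] f).roots.esymm 6 = 0 :=
    esymm_roots_high _ 4 hcard3 6 (by norm_num)
  have E3_7 : (derivative^[3] f).roots.esymm 7 = 0 :=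
    esymm_roots_high _ 4 hcard3 7 (by norm_num)
  have c4_0 : (derivative^[4] f).coeff 0 = 24 * f.coeff 4 := by
    rw [Polynomial.coeff_iterate_derivative]
    norm_num [Nat.descFactorial]
  have c4_1 : (derivative^[4] f).coeff 1 = 120 * f.coeff 5 := by
    rw [Polynomial.coeff_iterate_derivative]
    norm_num [Nat.descFactorial]
  have c4_2 : (derivative^[4] f).coeff 2 = 360 * f.coeff 6 := by
    rw [Polynomial.coeff_iterate_derivative]
    norm_num [Nat.descFactorial]
  have c4_3 : (derivative^[4] f).coeff 3 = 840 * f.coeff 7 := by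
    rw [Polynomial.coeff_iterate_derivative]
    norm_num [Nat.descFactorial]
  have hne4 : (derivative^[4] f) ≠ 0 := fun h => by
    rw [h] at c4_3; simp at c4_3; exact ha7 (by tauto)
  have hdeg4 : (derivative^[4] f).natDegree = 3 := by
    refine le_antisymm ((Polynomial.natDegree_iterate_derivative f 4).trans (by rw [hnd])) ?_
    apply Polynomial.le_natDegree_of_ne_zero
    rw [c4_3]
    exact mul_ne_zero (by norm_num) ha7
  have hcard4 : Multiset.card (derivative^[4] f).roots = 3 := by
    rw [← hdeg4]
    exact (Polynomial.splits_iff_card_roots.mp (IsAlgClosed.splits (k := ℂ) _))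
  have hlc4 : (derivative^[4] f).leadingCoeff = 840 * f.coeff 7 := by
    rw [Polynomial.leadingCoeff, hdeg4, c4_3]
  have E4_1 : (derivative^[4] f).roots.esymm 1 = (-1)^1 * (360 * f.coeff 6) / (840 * f.coeff 7) := by
    rw [esymm_roots _ hne4 1 (by rw [hdeg4]; try norm_num), hdeg4,
      show (3 - 1 : ℕ) = 2 from rfl, c4_2, hlc4]
  have E4_2 : (derivative^[4] f).roots.esymm 2 = (-1)^2 * (120 * f.coeff 5) / (840 * f.coeff 7) := by
    rw [esymm_roots _ hne4 2 (by rw [hdeg4]; try norm_num), hdeg4,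
      show (3 - 2 : ℕ) = 1 from rfl, c4_1, hlc4]
  have E4_3 : (derivative^[4] f).roots.esymm 3 = (-1)^3 * (24 * f.coeff 4) / (840 * f.coeff 7) := by
    rw [esymm_roots _ hne4 3 (by rw [hdeg4]; try norm_num), hdeg4,
      show (3 - 3 : ℕ) = 0 from rfl, c4_0, hlc4]
  have E4_4 : (derivative^[4] f).roots.esymm 4 = 0 :=
    esymm_roots_high _ 3 hcard4 4 (by norm_num)
  have E4_5 : (derivative^[4] f).roots.esymm 5 = 0 :=
    esymm_roots_high _ 3 hcard4 5 (by norm_num)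
  have E4_6 : (derivative^[4] f).roots.esymm 6 = 0 :=
    esymm_roots_high _ 3 hcard4 6 (by norm_num)
  have E4_7 : (derivative^[4] f).roots.esymm 7 = 0 :=
    esymm_roots_high _ 3 hcard4 7 (by norm_num)
  have c5_0 : (derivative^[5] f).coeff 0 = 120 * f.coeff 5 := by
    rw [Polynomial.coeff_iterate_derivative]
    norm_num [Nat.descFactorial]
  have c5_1 : (derivative^[5] f).coeff 1 = 720 * f.coeff 6 := by
    rw [Polynomial.coeff_iterate_derivative]
    norm_num [Nat.descFactorial]
  have c5_2 : (derivative^[5] f).coeff 2 = 2520 * f.coeff 7 := by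
    rw [Polynomial.coeff_iterate_derivative]
    norm_num [Nat.descFactorial]
  have hne5 : (derivative^[5] f) ≠ 0 := fun h => by
    rw [h] at c5_2; simp at c5_2; exact ha7 (by tauto)
  have hdeg5 : (derivative^[5] f).natDegree = 2 := by
    refine le_antisymm ((Polynomial.natDegree_iterate_derivative f 5).trans (by rw [hnd])) ?_
    apply Polynomial.le_natDegree_of_ne_zero
    rw [c5_2]
    exact mul_ne_zero (by norm_num) ha7
  have hcard5 : Multiset.card (derivative^[5] f).roots = 2 := by
    rw [← hdeg5]
    exact (Polynomial.splits_iff_card_roots.mp (IsAlgClosed.splits (k := ℂ) _))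
  have hlc5 : (derivative^[5] f).leadingCoeff = 2520 * f.coeff 7 := by
    rw [Polynomial.leadingCoeff, hdeg5, c5_2]
  have E5_1 : (derivative^[5] f).roots.esymm 1 = (-1)^1 * (720 * f.coeff 6) / (2520 * f.coeff 7) := by
    rw [esymm_roots _ hne5 1 (by rw [hdeg5]; try norm_num), hdeg5,
      show (2 - 1 : ℕ) = 1 from rfl, c5_1, hlc5]
  have E5_2 : (derivative^[5] f).roots.esymm 2 = (-1)^2 * (120 * f.coeff 5) / (2520 * f.coeff 7) := by
    rw [esymm_roots _ hne5 2 (by rw [hdeg5]; try norm_num), hdeg5,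
      show (2 - 2 : ℕ) = 0 from rfl, c5_0, hlc5]
  have E5_3 : (derivative^[5] f).roots.esymm 3 = 0 :=
    esymm_roots_high _ 2 hcard5 3 (by norm_num)
  have E5_4 : (derivative^[5] f).roots.esymm 4 = 0 :=
    esymm_roots_high _ 2 hcard5 4 (by norm_num)
  have E5_5 : (derivative^[5] f).roots.esymm 5 = 0 :=
    esymm_roots_high _ 2 hcard5 5 (by norm_num)
  have E5_6 : (derivative^[5] f).roots.esymm 6 = 0 :=
    esymm_roots_high _ 2 hcard5 6 (by norm_num)
  have E5_7 : (derivative^[5] f).roots.esymm 7 = 0 :=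
    esymm_roots_high _ 2 hcard5 7 (by norm_num)
  simp only [phi, hnd]
  rw [sum_eval f hnd, sum_eval f hnd, sum_eval f hnd, sum_eval f hnd, sum_eval f hnd]
  simp only [Finset.sum_range_succ, Finset.sum_range_zero, psum_zero,
    psum1, psum2, psum3, psum4, psum5, psum6, psum7]
  rw [hcard1, hcard2, hcard3, hcard4, hcard5]
  rw [E1_1, E1_2, E1_3, E1_4, E1_5, E1_6, E1_7, E2_1, E2_2, E2_3, E2_4, E2_5, E2_6, E2_7, E3_1, E3_2, E3_3, E3_4, E3_5, E3_6, E3_7, E4_1, E4_2, E4_3, E4_4, E4_5, E4_6, E4_7, E5_1, E5_2, E5_3, E5_4, E5_5, E5_6, E5_7]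
  rw [show ((7-1:ℕ):ℂ) = 6 from by norm_num, show ((7-2:ℕ):ℂ) = 5 from by norm_num,
    show ((7-3:ℕ):ℂ) = 4 from by norm_num, show ((7-4:ℕ):ℂ) = 3 from by norm_num,
    show ((7-5:ℕ):ℂ) = 2 from by norm_num]
  have hy : f.coeff 7 * (f.coeff 7)⁻¹ = 1 := mul_inv_cancel₀ ha7
  linear_combination ((-293688/117649 : ℂ) * f.coeff 6 ^ 7 * (f.coeff 7)⁻¹ ^ 6 +
      (293688/16807 : ℂ) * f.coeff 5 * f.coeff 6 ^ 5 * (f.coeff 7)⁻¹ ^ 5 +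
      (-83808/2401 : ℂ) * f.coeff 5 ^ 2 * f.coeff 6 ^ 3 * (f.coeff 7)⁻¹ ^ 4 +
      (5972/343 : ℂ) * f.coeff 5 ^ 3 * f.coeff 6 * (f.coeff 7)⁻¹ ^ 3 +
      (-5976/343 : ℂ) * f.coeff 4 * f.coeff 6 ^ 4 * (f.coeff 7)⁻¹ ^ 4 +
      (17856/343 : ℂ) * f.coeff 4 * f.coeff 5 * f.coeff 6 ^ 2 * (f.coeff 7)⁻¹ ^ 3 +
      (-846/49 : ℂ) * f.coeff 4 * f.coeff 5 ^ 2 * (f.coeff 7)⁻¹ ^ 2 +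
      (-120/7 : ℂ) * f.coeff 4 ^ 2 * f.coeff 6 * (f.coeff 7)⁻¹ ^ 2 +
      (5868/343 : ℂ) * f.coeff 3 * f.coeff 6 ^ 3 * (f.coeff 7)⁻¹ ^ 3 +
      (-1662/49 : ℂ) * f.coeff 3 * f.coeff 5 * f.coeff 6 * (f.coeff 7)⁻¹ ^ 2 +
      (116/7 : ℂ) * f.coeff 3 * f.coeff 4 * (f.coeff 7)⁻¹ +
      (-780/49 : ℂ) * f.coeff 2 * f.coeff 6 ^ 2 * (f.coeff 7)⁻¹ ^ 2 +
      (47/3 : ℂ) * f.coeff 2 * f.coeff 5 * (f.coeff 7)⁻¹ +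
      (85/7 : ℂ) * f.coeff 1 * f.coeff 6 * (f.coeff 7)⁻¹) * hy
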